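/- For any admissible configuration X and word α = (α_1,…,α_n), the total displacement of the front decomposes as d_X(α) = Σ_{k=1}^{n} Σ_{j=1}^{n−k+1} ε_X((α_k, α_{k+1}, …, α_{k+j−1})), i.e. d_X(α) is the sum of ε_X(β) over all consecutive subwords β of α counted with multiplicity. -/

import Mathlib

open scoped Classical

/-- A configuration of the infinite-bin model: number of balls in each bin. -/
abbrev Config := ℤ → ℕ∞

/-- Admissible configuration: nonempty bins form a semi-infinite interval, and
every bin to the left of an infinite bin is infinite. -/
def IsAdmissible (X : Config) : Prop :=
  (∃ m : ℤ, ∀ j : ℤ, X j ≠ 0 ↔ j ≤ m) ∧ ∀ j : ℤ, X j = ⊤ → X (j - 1) = ⊤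

/-- N(X,k): number of balls in bins of index ≥ k. -/
noncomputable def Nballs (X : Config) (k : ℤ) : ℕ∞ := ∑' j : {j : ℤ // k ≤ j}, X j

/-- B(X,ξ): leftmost position such that there are fewer than ξ balls to its right. -/
noncomputable def Bpos (X : Config) (ξ : ℕ) : ℤ := sInf {j : ℤ | Nballs X j < (ξ : ℕ∞)}

/-- The move of type ξ: add one ball in the bin of index B(X,ξ). -/
noncomputable def Phi (ξ : ℕ) (X : Config) : Config :=
  fun j => X j + (if j = Bpos X ξ then 1 else 0)

/-- The move of type ξ ∈ ℕ ∪ {∞}, with Φ_∞ = id. -/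
noncomputable def PhiE (ξ : ℕ∞) (X : Config) : Config :=
  if ξ = ⊤ then X else Phi ξ.toNat X

/-- The shift operator τ. -/
def shift (X : Config) : Config := fun j => X (j - 1)

/-- Configuration obtained after applying successively the moves listed in α. -/
noncomputable def applyWord (X : Config) (α : List ℕ) : Config :=
  α.foldl (fun Y a => Phi a Y) X

/-- d_X(α): displacement of the front after performing the word α. -/
noncomputable def dX (X : Config) (α : List ℕ) : ℤ :=
  Bpos (applyWord X α) 1 - Bpos X 1

/-- α ∈ P_X : α is nonempty and its last move places a ball in a previously empty bin. -/
def inP (X : Config) (α : List ℕ) : Prop :=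
  ∃ β a, α = β ++ [a] ∧ applyWord X β (Bpos (applyWord X β) a) = 0

/-- ε_X(α) = 1_{α ∈ P_X} - 1_{ϖα ∈ P_X}. -/
noncomputable def eps (X : Config) (α : List ℕ) : ℤ :=
  (if inP X α then 1 else 0) - (if inP X α.tail then 1 else 0)

/-!
A move of type `a ≥ 1` puts its ball at `B(X,a) ≤ B(X,1)`, and for an admissible `X` the front
`B(X,1)` is the first empty bin; so the front advances by one exactly when the ball lands in an empty
bin, and `d_X(α)` counts the prefixes of `α` lying in `P_X`. On the other side, the values of
`ε_X = p - p ∘ ϖ` (with `p` the indicator of `P_X`) on the subwords starting at position `k` sum to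
the number of prefixes in `P_X` of `α_k ⋯ α_n` minus that of `α_{k+1} ⋯ α_n`, and these telescope
over `k`.
-/

open Finset

theorem Finset.sum_Icc_one_eq_sum_range {M : Type*} [AddCommMonoid M] (h : ℕ → M) (n : ℕ) :
    ∑ k ∈ Icc 1 n, h k = ∑ k ∈ range n, h (k + 1) := by
  rw [range_eq_Ico, sum_Ico_add' h 0 n 1]
  rfl

namespace List

variable {α M : Type*} [AddCommGroup M]

def prefixSum (f : List α → M) (l : List α) : M :=
  ∑ t ∈ Icc 1 l.length, f (l.take t)

def infixSum (f : List α → M) (l : List α) : M :=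
  ∑ k ∈ Icc 1 l.length, ∑ j ∈ Icc 1 (l.length - k + 1), f ((l.drop (k - 1)).take j)

theorem prefixSum_concat (f : List α → M) (l : List α) (a : α) :
    prefixSum f (l ++ [a]) = prefixSum f l + f (l ++ [a]) := by
  rw [prefixSum, length_append, length_singleton, sum_Icc_succ_top (Nat.le_add_left 1 _),
    take_of_length_le (by simp), prefixSum]
  congr 1
  refine sum_congr rfl fun t ht => ?_
  rw [take_append_of_le_length (mem_Icc.1 ht).2]

theorem infixSum_cons (f : List α → M) (a : α) (l : List α) :
    infixSum f (a :: l) = prefixSum f (a :: l) + infixSum f l := by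
  rw [infixSum, sum_Icc_one_eq_sum_range, length_cons, Finset.sum_range_succ', add_comm]
  simp [prefixSum, infixSum, sum_Icc_one_eq_sum_range _ l.length, Nat.add_sub_add_right]

theorem prefixSum_sub_tail (f : List α → M) (hf : f [] = 0) (l : List α) :
    prefixSum (fun w => f w - f w.tail) l = prefixSum f l - prefixSum f l.tail := by
  cases l with
  | nil => simp [prefixSum]
  | cons a l =>
    rw [prefixSum, sum_sub_distrib, ← prefixSum, sub_right_inj, sum_Icc_one_eq_sum_range,
      length_cons, Finset.sum_range_succ']
    simp [prefixSum, hf, sum_Icc_one_eq_sum_range _ l.length]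

theorem infixSum_sub_tail (f : List α → M) (hf : f [] = 0) (l : List α) :
    infixSum (fun w => f w - f w.tail) l = prefixSum f l := by
  induction l with
  | nil => simp [infixSum, prefixSum]
  | cons a l ih => rw [infixSum_cons, ih, prefixSum_sub_tail f hf, tail_cons, sub_add_cancel]

end List

protected theorem ENat.summable {ι : Type*} (f : ι → ℕ∞) : Summable f :=
  ⟨_, tendsto_atTop_iSup fun _ _ h => sum_le_sum_of_subset h⟩

section Front

variable {X : Config} {k m : ℤ} {a : ℕ}

theorem Nballs_eq_zero (h : ∀ j, k ≤ j → X j = 0) : Nballs X k = 0 := by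
  simp [Nballs, fun j : {j : ℤ // k ≤ j} => h j j.2]

theorem natCast_le_Nballs (h : ∀ j, k ≤ j → j < k + a → X j ≠ 0) : (a : ℕ∞) ≤ Nballs X k :=
  calc (a : ℕ∞) = ∑ _ ∈ Ico k (k + a), (1 : ℕ∞) := by simp
    _ ≤ ∑ j ∈ Ico k (k + a), {j | k ≤ j}.indicator X j := by
      refine sum_le_sum fun j hj => ?_
      obtain ⟨hkj, hja⟩ := mem_Ico.1 hj
      simpa [hkj, Order.one_le_iff_ne_zero] using h j hkj hja
    _ ≤ ∑' j, {j | k ≤ j}.indicator X j :=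
      (ENat.summable _).sum_le_tsum _ fun _ _ => zero_le
    _ = Nballs X k := (tsum_subtype {j | k ≤ j} X).symm

variable (hm : ∀ j, X j ≠ 0 ↔ j ≤ m)
include hm

theorem Nballs_eq_zero_of_lt (hk : m < k) : Nballs X k = 0 :=
  Nballs_eq_zero fun j hj => not_not.1 fun h => by have := (hm j).1 h; omega

theorem natCast_le_Nballs_of_le (hk : k + a ≤ m + 1) : (a : ℕ∞) ≤ Nballs X k :=
  natCast_le_Nballs fun j _ hj => (hm j).2 (by omega)

theorem Bpos_one_eq : Bpos X 1 = m + 1 := by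
  refine IsLeast.csInf_eq ⟨?_, fun j hj => ?_⟩
  · simp [Nballs_eq_zero_of_lt hm (lt_add_one m)]
  · by_contra! hjm
    exact (natCast_le_Nballs_of_le hm (a := 1) (by omega)).not_gt hj

theorem Bpos_le (ha : 1 ≤ a) : Bpos X a ≤ m + 1 := by
  refine csInf_le ⟨m + 2 - a, fun j hj => ?_⟩ ?_
  · by_contra! hjm
    exact (natCast_le_Nballs_of_le hm (by omega)).not_gt hj
  · simpa [Nballs_eq_zero_of_lt hm (lt_add_one m)] using Nat.succ_le_iff.1 ha

end Front

section Step

variable {X : Config} {m : ℤ} {a : ℕ}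

theorem Phi_ne_zero_iff {j : ℤ} : Phi a X j ≠ 0 ↔ X j ≠ 0 ∨ j = Bpos X a := by
  by_cases hj : j = Bpos X a <;> simp [Phi, hj]

theorem Phi_eq_top_iff {j : ℤ} : Phi a X j = ⊤ ↔ X j = ⊤ := by
  by_cases hj : j = Bpos X a <;> simp [Phi, hj]

theorem Phi_ne_zero_iff_le (hm : ∀ j, X j ≠ 0 ↔ j ≤ m) (ha : 1 ≤ a) (j : ℤ) :
    Phi a X j ≠ 0 ↔ j ≤ m + if X (Bpos X a) = 0 then 1 else 0 := by
  have hB := Bpos_le hm ha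
  rw [Phi_ne_zero_iff, hm]
  split_ifs with h0
  · have : ¬ Bpos X a ≤ m := fun h => (hm _).2 h h0
    omega
  · have := (hm (Bpos X a)).1 h0
    omega

theorem Bpos_one_Phi (hm : ∀ j, X j ≠ 0 ↔ j ≤ m) (ha : 1 ≤ a) :
    Bpos (Phi a X) 1 = Bpos X 1 + if X (Bpos X a) = 0 then 1 else 0 := by
  rw [Bpos_one_eq (Phi_ne_zero_iff_le hm ha), Bpos_one_eq hm]
  ring

theorem IsAdmissible.Phi (hX : IsAdmissible X) (ha : 1 ≤ a) : IsAdmissible (Phi a X) := by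
  obtain ⟨⟨m, hm⟩, htop⟩ := hX
  refine ⟨⟨_, Phi_ne_zero_iff_le hm ha⟩, fun j hj => ?_⟩
  rw [Phi_eq_top_iff] at hj ⊢
  exact htop j hj

end Step

theorem applyWord_concat (X : Config) (β : List ℕ) (a : ℕ) :
    applyWord X (β ++ [a]) = Phi a (applyWord X β) := by
  simp [applyWord]

theorem IsAdmissible.applyWord {X : Config} (hX : IsAdmissible X) {α : List ℕ}
    (hα : ∀ a ∈ α, 1 ≤ a) : IsAdmissible (applyWord X α) := by
  induction α generalizing X with
  | nil => exact hX
  | cons a α ih =>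
    exact ih (hX.Phi (hα a List.mem_cons_self)) fun b hb => hα b (List.mem_cons_of_mem a hb)

theorem not_inP_nil (X : Config) : ¬ inP X [] := by
  rintro ⟨β, a, h, -⟩
  simp at h

theorem inP_concat (X : Config) (β : List ℕ) (a : ℕ) :
    inP X (β ++ [a]) ↔ applyWord X β (Bpos (applyWord X β) a) = 0 := by
  refine ⟨fun ⟨γ, b, h, h0⟩ => ?_, fun h0 => ⟨β, a, rfl, h0⟩⟩
  obtain ⟨rfl, rfl⟩ : β = γ ∧ a = b := by simpa using h
  exact h0

theorem dX_concat {X : Config} (hX : IsAdmissible X) {β : List ℕ} (hβ : ∀ b ∈ β, 1 ≤ b)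
    {a : ℕ} (ha : 1 ≤ a) : dX X (β ++ [a]) = dX X β + if inP X (β ++ [a]) then 1 else 0 := by
  obtain ⟨⟨m, hm⟩, -⟩ := hX.applyWord hβ
  simp only [dX, applyWord_concat, Bpos_one_Phi hm ha, inP_concat]
  ring

theorem dX_eq_prefixSum {X : Config} (hX : IsAdmissible X) (α : List ℕ) (hα : ∀ a ∈ α, 1 ≤ a) :
    dX X α = α.prefixSum fun w => if inP X w then 1 else 0 := by
  induction α using List.reverseRecOn with
  | nil => simp [dX, applyWord, List.prefixSum]
  | append_singleton β a ih =>
    have hβ : ∀ b ∈ β, 1 ≤ b := fun b hb => hα b (List.mem_append_left _ hb)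
    rw [dX_concat hX hβ (hα a (by simp)), ih hβ, List.prefixSum_concat]

/-- The displacement of the front equals the sum of ε_X(β) over all consecutive
subwords β of α, counted with multiplicity. -/
theorem dX_eq_sum_eps (X : Config) (hX : IsAdmissible X) (α : List ℕ)
    (hα : ∀ a ∈ α, 1 ≤ a) :
    dX X α = ∑ k ∈ Finset.Icc 1 α.length, ∑ j ∈ Finset.Icc 1 (α.length - k + 1),
      eps X ((α.drop (k - 1)).take j) := by
  let p : List ℕ → ℤ := fun w => if inP X w then 1 else 0
  -- `eps X` is `fun w => p w - p w.tail`, and `infixSum` unfolds to the right-hand side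
  calc dX X α = α.prefixSum p := dX_eq_prefixSum hX α hα
    _ = α.infixSum (fun w => p w - p w.tail) :=
      (α.infixSum_sub_tail p (if_neg (not_inP_nil X))).symm
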